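/- Let G = (V,E) be a finite simple graph and let C ⊆ V be such that G[C] is connected. Suppose e = {u,v} is a bridge of G[C] and let C_u and C_v be the vertex sets of the two connected components of G[C] − e containing u and v respectively, with |C_u| ≥ 2 and |C_v| ≥ 2. Then uw(C_u) + uw(C_v) ≥ uw(C), i.e., splitting the coalition C along the bridge e does not decrease the utilitarian welfare. -/

import Mathlib

open Finset

/-- The utilitarian welfare `2|E(G[C])|/|C|` of a coalition `C`: twice the number of edges
of the induced subgraph, counted as ordered adjacent pairs inside `C`, divided by `|C|`. -/
def uw {V : Type*} [DecidableEq V] (G : SimpleGraph V) [DecidableRel G.Adj]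
    (C : Finset V) : ℚ :=
  (((C ×ˢ C).filter fun p => G.Adj p.1 p.2).card : ℚ) / (C.card : ℚ)

/-!
Count ordered adjacent pairs. Those inside `C` are the pairs inside `Cu`, those inside `Cv`, and
the two orientations of the bridge; so with `a`, `b` the first two counts, `m = |Cu|` and
`n = |Cv|`, we get `uw C = (a + b + 2) / (m + n)`. Since `G[Cu]` and `G[Cv]` are connected and
nontrivial, every vertex has a neighbour on its side, so `a ≥ m` and `b ≥ n`. Then
`(a + b) / (m + n) ≤ max (a / m) (b / n) ≤ a / m + b / n - 1` and `2 / (m + n) ≤ 1`.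
-/

namespace SimpleGraph

variable {V : Type*} (G : SimpleGraph V) [DecidableRel G.Adj]

def adjPairs (A B : Finset V) : Finset (V × V) :=
  (A ×ˢ B).filter fun p => G.Adj p.1 p.2

variable {G}

lemma uw_eq_card_adjPairs_div [DecidableEq V] (C : Finset V) :
    uw G C = (#(G.adjPairs C C) : ℚ) / #C := rfl

lemma card_adjPairs_union_left [DecidableEq V] {A A' : Finset V} (h : Disjoint A A')
    (B : Finset V) :
    #(G.adjPairs (A ∪ A') B) = #(G.adjPairs A B) + #(G.adjPairs A' B) := by
  rw [adjPairs, union_product, filter_union, card_union_of_disjoint]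
  · rfl
  · exact (disjoint_product.mpr (.inl h)).mono (filter_subset _ _) (filter_subset _ _)

lemma card_adjPairs_union_right [DecidableEq V] (A : Finset V) {B B' : Finset V}
    (h : Disjoint B B') :
    #(G.adjPairs A (B ∪ B')) = #(G.adjPairs A B) + #(G.adjPairs A B') := by
  rw [adjPairs, product_union, filter_union, card_union_of_disjoint]
  · rfl
  · exact (disjoint_product.mpr (.inr h)).mono (filter_subset _ _) (filter_subset _ _)

lemma card_adjPairs_comm (A B : Finset V) : #(G.adjPairs A B) = #(G.adjPairs B A) := by
  refine card_equiv (Equiv.prodComm V V) fun p => ?_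
  simp [adjPairs, G.adj_comm, and_comm]

lemma card_adjPairs_union_self [DecidableEq V] {A B : Finset V} (h : Disjoint A B) :
    #(G.adjPairs (A ∪ B) (A ∪ B)) =
      #(G.adjPairs A A) + #(G.adjPairs B B) + 2 * #(G.adjPairs A B) := by
  rw [card_adjPairs_union_left h, card_adjPairs_union_right _ h, card_adjPairs_union_right _ h,
    card_adjPairs_comm B A]
  ring

lemma adjPairs_eq_singleton {A B : Finset V} {u v : V} (hu : u ∈ A) (hv : v ∈ B)
    (huv : G.Adj u v) (hunique : ∀ x ∈ A, ∀ y ∈ B, G.Adj x y → x = u ∧ y = v) :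
    G.adjPairs A B = {(u, v)} := by
  ext ⟨x, y⟩
  simp only [adjPairs, mem_filter, mem_product, mem_singleton, Prod.mk.injEq]
  constructor
  · rintro ⟨⟨hx, hy⟩, hxy⟩
    exact hunique x hx y hy hxy
  · rintro ⟨rfl, rfl⟩
    exact ⟨⟨hu, hv⟩, huv⟩

lemma card_le_card_adjPairs [DecidableEq V] {X : Finset V} (hX : 1 < #X)
    (hconn : (G.induce (X : Set V)).Preconnected) : #X ≤ #(G.adjPairs X X) := by
  have : Nontrivial (X : Set V) := Set.nontrivial_coe_sort.mpr (one_lt_card_iff_nontrivial.mp hX)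
  have hsub : X ⊆ (G.adjPairs X X).image Prod.fst := by
    intro x hx
    obtain ⟨y, hxy⟩ := hconn.exists_adj_of_nontrivial ⟨x, hx⟩
    exact mem_image.mpr ⟨(x, y), by simpa [adjPairs, hx] using hxy, rfl⟩
  exact (card_le_card hsub).trans card_image_le

end SimpleGraph

lemma add_add_two_div_add_le_div_add_div {K : Type*} [Field K] [LinearOrder K]
    [IsStrictOrderedRing K] {a b m n : K} (hm : 1 ≤ m) (hn : 1 ≤ n) (ha : m ≤ a)
    (hb : n ≤ b) :
    (a + b + 2) / (m + n) ≤ a / m + b / n := by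
  have hm0 : 0 < m := by linarith
  have hn0 : 0 < n := by linarith
  rw [div_add_div _ _ hm0.ne' hn0.ne', div_le_div_iff₀ (by linarith) (by positivity)]
  nlinarith [mul_pos hm0 hn0, mul_nonneg (sub_nonneg.mpr ha) (mul_self_nonneg n),
    mul_nonneg (sub_nonneg.mpr hb) (mul_self_nonneg m)]

open SimpleGraph in
theorem bridge_split_does_not_decrease_uw_general
    {V : Type*} [DecidableEq V] (G : SimpleGraph V) [DecidableRel G.Adj]
    (C Cu Cv : Finset V) (u v : V)
    (hu : u ∈ Cu) (hv : v ∈ Cv) (huv : G.Adj u v)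
    (hdisj : Disjoint Cu Cv) (hunion : Cu ∪ Cv = C)
    (hCu : 2 ≤ Cu.card) (hCv : 2 ≤ Cv.card)
    (hconnu : (G.induce (Cu : Set V)).Connected)
    (hconnv : (G.induce (Cv : Set V)).Connected)
    (hbridge : ∀ x ∈ Cu, ∀ y ∈ Cv, G.Adj x y → x = u ∧ y = v) :
    uw G C ≤ uw G Cu + uw G Cv := by
  have hpairs : #(G.adjPairs C C) = #(G.adjPairs Cu Cu) + #(G.adjPairs Cv Cv) + 2 := by
    rw [← hunion, card_adjPairs_union_self hdisj, adjPairs_eq_singleton hu hv huv hbridge,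
      card_singleton]
  have hcard : #C = #Cu + #Cv := by rw [← hunion, card_union_of_disjoint hdisj]
  have hu_le := card_le_card_adjPairs hCu hconnu.preconnected
  have hv_le := card_le_card_adjPairs hCv hconnv.preconnected
  simp only [uw_eq_card_adjPairs_div, hpairs, hcard]
  push_cast
  exact add_add_two_div_add_le_div_add_div (by norm_cast; omega) (by norm_cast; omega)
    (by exact_mod_cast hu_le) (by exact_mod_cast hv_le)

/-- Splitting a coalition `C` along a bridge `{u,v}` of `G[C]` whose two sides `Cu` and `Cv`
(the connected components of `G[C] - e` containing `u` and `v`) both have at least two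
vertices does not decrease the utilitarian welfare. The bridge and its components are
described explicitly: `Cu` and `Cv` are disjoint connected pieces covering `C`, with
`{u, v}` the unique edge of `G[C]` between them. -/
theorem bridge_split_does_not_decrease_uw
    {V : Type*} [Fintype V] [DecidableEq V] (G : SimpleGraph V) [DecidableRel G.Adj]
    (C Cu Cv : Finset V) (u v : V)
    (hconn : (G.induce (C : Set V)).Connected)
    (hu : u ∈ Cu) (hv : v ∈ Cv) (huv : G.Adj u v)
    (hdisj : Disjoint Cu Cv) (hunion : Cu ∪ Cv = C)
    (hCu : 2 ≤ Cu.card) (hCv : 2 ≤ Cv.card)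
    (hconnu : (G.induce (Cu : Set V)).Connected)
    (hconnv : (G.induce (Cv : Set V)).Connected)
    (hbridge : ∀ x ∈ Cu, ∀ y ∈ Cv, G.Adj x y → x = u ∧ y = v) :
    uw G C ≤ uw G Cu + uw G Cv :=
  bridge_split_does_not_decrease_uw_general G C Cu Cv u v hu hv huv hdisj hunion hCu hCv hconnu
    hconnv hbridge
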